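/- Let (X,T) be a minimal mean equicontinuous topological dynamical system with unique invariant measure μ. Then there is a Borel set X₀ ⊆ X with μ(X₀)=1 such that for every d∈ℕ and every x∈X₀, the point (x,x,…,x) is a minimal point for T × T² × … × T^d. -/

import Mathlib

open Filter Metric Set MeasureTheory

noncomputable section

/-- Upper density of a set of nonnegative integers. -/
def upperDensity (F : Set ℕ) : ℝ :=
  Filter.atTop.limsup fun n : ℕ => ((F ∩ Set.Ico 0 n).ncard : ℝ) / n

/-- Upper Banach density of a set of nonnegative integers. -/
def banachDensity (F : Set ℕ) : ℝ :=
  Filter.atTop.limsup fun n : ℕ => ⨆ M : ℕ, ((F ∩ Set.Ico M (M + n)).ncard : ℝ) / n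

variable {X Y : Type} [MetricSpace X] [MetricSpace Y]

/-- A t.d.s. is minimal if every forward orbit is dense. -/
def IsMinimalTDS (T : X → X) : Prop := ∀ x : X, Dense (Set.range fun n : ℕ => T^[n] x)

/-- A factor map between topological dynamical systems. -/
def IsFactorMap (T : X → X) (S : Y → Y) (π : X → Y) : Prop :=
  Continuous π ∧ Function.Surjective π ∧ π ∘ T = S ∘ π

/-- Uniform equicontinuity of the family of iterates. -/
def IsEquicontinuousSys (T : X → X) : Prop :=
  ∀ ε > 0, ∃ δ > 0, ∀ x y : X, dist x y < δ → ∀ n : ℕ, dist (T^[n] x) (T^[n] y) < ε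

/-- Birkhoff average of the distance of two orbits. -/
def birkhoffDist (T : X → X) (x y : X) (n : ℕ) : ℝ :=
  (∑ i ∈ Finset.Icc 1 n, dist (T^[i] x) (T^[i] y)) / n

/-- The Besicovitch pseudometric. -/
def besicovitch (T : X → X) (x y : X) : ℝ := Filter.atTop.limsup (birkhoffDist T x y)

/-- Mean equicontinuity. -/
def MeanEquicontinuous (T : X → X) : Prop :=
  ∀ ε > 0, ∃ δ > 0, ∀ x y : X, dist x y ≤ δ → besicovitch T x y ≤ ε

/-- Cesàro average of the diameters of the iterates of a set. -/
def diamAvg (T : X → X) (U : Set X) (n : ℕ) : ℝ :=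
  (∑ i ∈ Finset.Icc 1 n, Metric.diam (T^[i] '' U)) / n

/-- Diam-mean equicontinuity point. -/
def DiamMeanEqPt (T : X → X) (x : X) : Prop :=
  ∀ ε > 0, ∃ δ > 0, Filter.atTop.limsup (diamAvg T (Metric.ball x δ)) < ε

/-- Diam-mean equicontinuity. -/
def DiamMeanEquicontinuous (T : X → X) : Prop := ∀ x : X, DiamMeanEqPt T x

/-- Best average of diameters over windows of length `n`. -/
def banachDiamAvg (T : X → X) (U : Set X) (n : ℕ) : ℝ :=
  ⨆ M : ℕ, (∑ i ∈ Finset.Icc (M + 1) (M + n), Metric.diam (T^[i] '' U)) / n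

/-- Banach diam-mean equicontinuity point. -/
def BanachDiamMeanEqPt (T : X → X) (x : X) : Prop :=
  ∀ ε > 0, ∃ δ > 0, Filter.atTop.limsup (banachDiamAvg T (Metric.ball x δ)) < ε

/-- Banach diam-mean equicontinuity. -/
def BanachDiamMeanEquicontinuous (T : X → X) : Prop := ∀ x : X, BanachDiamMeanEqPt T x

/-- `π` is the maximal equicontinuous factor map of `(X,T)`, with factor system `(Y,S)`. -/
def IsMEF (T : X → X) (S : Y → Y) (π : X → Y) : Prop :=
  IsFactorMap T S π ∧ IsEquicontinuousSys S ∧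
    ∀ (Z : Type) [MetricSpace Z] [CompactSpace Z] (R : Z → Z) (φ : X → Z),
      IsFactorMap T R φ → IsEquicontinuousSys R →
        ∃ ψ : Y → Z, Continuous ψ ∧ ψ ∘ π = φ ∧ ψ ∘ S = R ∘ ψ


section LimsupKit
variable {u v w : ℕ → ℝ} {C K a b : ℝ}

lemma lk_bdd (h : ∀ n, u n ≤ C) : IsBoundedUnder (· ≤ ·) atTop u :=
  isBoundedUnder_of ⟨C, h⟩

lemma lk_cobdd (h : ∀ n, 0 ≤ u n) : IsCoboundedUnder (· ≤ ·) atTop u :=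
  isCoboundedUnder_le_of_le atTop h

lemma lk_limsup_le (h0 : ∀ n, 0 ≤ u n) (h : ∀ᶠ n in atTop, u n ≤ a) :
    atTop.limsup u ≤ a :=
  limsup_le_of_le (lk_cobdd h0) h

lemma lk_eventually_lt (hC : ∀ n, u n ≤ C) (h : atTop.limsup u < a) :
    ∀ᶠ n in atTop, u n < a :=
  eventually_lt_of_limsup_lt h (lk_bdd hC)

lemma lk_limsup_le_add (h0u : ∀ n, 0 ≤ u n) (hCv : ∀ n, v n ≤ C)
    (h : ∀ ε : ℝ, 0 < ε → ∀ᶠ n in atTop, u n ≤ v n + b + ε) :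
    atTop.limsup u ≤ atTop.limsup v + b := by
  apply le_of_forall_pos_le_add
  intro ε hε
  have hv : ∀ᶠ n in atTop, v n < atTop.limsup v + ε / 2 :=
    lk_eventually_lt hCv (lt_add_of_pos_right _ (by linarith))
  have hu := h (ε/2) (by linarith)
  apply lk_limsup_le h0u
  filter_upwards [hv, hu] with n h1 h2
  linarith

lemma lk_limsup_add_le (h0u : ∀ n, 0 ≤ u n) (h0v : ∀ n, 0 ≤ v n)
    (hCv : ∀ n, v n ≤ C) (hCw : ∀ n, w n ≤ C)
    (h : ∀ n, u n ≤ v n + w n) :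
    atTop.limsup u ≤ atTop.limsup v + atTop.limsup w := by
  apply lk_limsup_le_add h0u hCv
  intro ε hε
  have hw : ∀ᶠ n in atTop, w n < atTop.limsup w + ε :=
    lk_eventually_lt hCw (lt_add_of_pos_right _ hε)
  filter_upwards [hw] with n h1
  have := h n
  linarith

lemma lk_limsup_congr (h0u : ∀ n, 0 ≤ u n) (h0v : ∀ n, 0 ≤ v n)
    (hCu : ∀ n, u n ≤ C) (hCv : ∀ n, v n ≤ C)
    (h : ∀ n : ℕ, 1 ≤ n → |u n - v n| ≤ K / n) :
    atTop.limsup u = atTop.limsup v := by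
  have key : ∀ ε : ℝ, 0 < ε → ∀ᶠ n in atTop, |u n - v n| ≤ ε := by
    intro ε hε
    have ht : Filter.Tendsto (fun n : ℕ => K / n) atTop (nhds 0) :=
      tendsto_const_div_atTop_nhds_zero_nat K
    have h2 : ∀ᶠ n : ℕ in atTop, K / n ≤ ε := ht.eventually (eventually_le_nhds hε)
    filter_upwards [h2, eventually_ge_atTop 1] with n h1 h2
    exact (h n h2).trans h1
  have h1 : atTop.limsup u ≤ atTop.limsup v + 0 := by
    apply lk_limsup_le_add h0u hCv
    intro ε hε
    filter_upwards [key ε hε] with n hn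
    have := abs_le.mp hn
    linarith
  have h2 : atTop.limsup v ≤ atTop.limsup u + 0 := by
    apply lk_limsup_le_add h0v hCu
    intro ε hε
    filter_upwards [key ε hε] with n hn
    have := abs_le.mp hn
    linarith
  linarith
section BesKit
variable {X : Type} [MetricSpace X] {T : X → X} {C : ℝ}

lemma bd_nonneg (T : X → X) (x y : X) (n : ℕ) : 0 ≤ birkhoffDist T x y n := by
  unfold birkhoffDist
  positivity

lemma bd_le (hC0 : 0 ≤ C) (hC : ∀ a b : X, dist a b ≤ C) (x y : X) (n : ℕ) :
    birkhoffDist T x y n ≤ C := by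
  unfold birkhoffDist
  rcases Nat.eq_zero_or_pos n with h | h
  · simp [h, hC0]
  · rw [div_le_iff₀ (by positivity)]
    calc ∑ i ∈ Finset.Icc 1 n, dist (T^[i] x) (T^[i] y)
        ≤ ∑ _i ∈ Finset.Icc 1 n, C := Finset.sum_le_sum (fun i _ => hC _ _)
      _ = n * C := by simp [Nat.card_Icc, mul_comm]
      _ = C * n := by ring

lemma bes_le (hC0 : 0 ≤ C) (hC : ∀ a b : X, dist a b ≤ C) (x y : X) :
    besicovitch T x y ≤ C :=
  lk_limsup_le (bd_nonneg T x y) (Eventually.of_forall (bd_le hC0 hC x y))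

lemma bes_symm (T : X → X) (x y : X) : besicovitch T x y = besicovitch T y x := by
  unfold besicovitch birkhoffDist
  simp_rw [dist_comm (T^[_] x)]

lemma bes_triangle (hC0 : 0 ≤ C) (hC : ∀ a b : X, dist a b ≤ C) (x y z : X) :
    besicovitch T x z ≤ besicovitch T x y + besicovitch T y z := by
  apply lk_limsup_add_le (bd_nonneg T x z) (bd_nonneg T x y)
    (bd_le hC0 hC x y) (bd_le hC0 hC y z)
  intro n
  unfold birkhoffDist
  rw [← add_div]
  have hs : ∑ i ∈ Finset.Icc 1 n, dist (T^[i] x) (T^[i] z)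
      ≤ (∑ i ∈ Finset.Icc 1 n, dist (T^[i] x) (T^[i] y))
        + ∑ i ∈ Finset.Icc 1 n, dist (T^[i] y) (T^[i] z) := by
    rw [← Finset.sum_add_distrib]
    exact Finset.sum_le_sum fun i _ => dist_triangle _ _ _
  rcases Nat.eq_zero_or_pos n with h | h
  · simp [h]
  · have hn : (0:ℝ) < n := by exact_mod_cast h
    exact div_le_div_of_nonneg_right hs hn.le

lemma sum_shift (f : ℕ → ℝ) (n : ℕ) :
    ∑ i ∈ Finset.Icc 1 n, f (i + 1) = (∑ i ∈ Finset.Icc 1 (n+1), f i) - f 1 := by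
  induction n with
  | zero => simp
  | succ n ih =>
      rw [Finset.sum_Icc_succ_top (by omega), ih, Finset.sum_Icc_succ_top (by omega : 1 ≤ n+1+1)]
      ring

lemma bes_T (hC0 : 0 ≤ C) (hC : ∀ a b : X, dist a b ≤ C) (x y : X) :
    besicovitch T (T x) (T y) = besicovitch T x y := by
  unfold besicovitch
  apply lk_limsup_congr (K := 2*C) (bd_nonneg T (T x) (T y)) (bd_nonneg T x y)
    (bd_le hC0 hC _ _) (bd_le hC0 hC _ _)
  intro n hn
  have hsum : ∑ i ∈ Finset.Icc 1 n, dist (T^[i] (T x)) (T^[i] (T y))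
      = (∑ i ∈ Finset.Icc 1 (n+1), dist (T^[i] x) (T^[i] y)) - dist (T^[1] x) (T^[1] y) := by
    rw [← sum_shift (fun i => dist (T^[i] x) (T^[i] y)) n]
    apply Finset.sum_congr rfl
    intro i _
    simp [Function.iterate_succ_apply]
  unfold birkhoffDist
  rw [hsum, Finset.sum_Icc_succ_top (by omega : 1 ≤ n+1)]
  have hnpos : (0:ℝ) < n := by exact_mod_cast hn
  have hd : ((∑ i ∈ Finset.Icc 1 n, dist (T^[i] x) (T^[i] y)) + dist (T^[n+1] x) (T^[n+1] y)
      - dist (T^[1] x) (T^[1] y)) / n - (∑ i ∈ Finset.Icc 1 n, dist (T^[i] x) (T^[i] y)) / n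
      = (dist (T^[n+1] x) (T^[n+1] y) - dist (T^[1] x) (T^[1] y)) / n := by
    field_simp
    ring
  rw [hd, abs_div, abs_of_nonneg (le_of_lt hnpos)]
  apply div_le_div_of_nonneg_right ?_ hnpos.le
  have h1 := hC (T^[n+1] x) (T^[n+1] y)
  have h2 := hC (T^[1] x) (T^[1] y)
  have h3 : (0:ℝ) ≤ dist (T^[n+1] x) (T^[n+1] y) := dist_nonneg
  have h4 : (0:ℝ) ≤ dist (T^[1] x) (T^[1] y) := dist_nonneg
  rw [abs_le]
  constructor <;> linarith

lemma bes_iterate (hC0 : 0 ≤ C) (hC : ∀ a b : X, dist a b ≤ C) (x y : X) (i : ℕ) :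
    besicovitch T (T^[i] x) (T^[i] y) = besicovitch T x y := by
  induction i with
  | zero => simp
  | succ i ih =>
      rw [Function.iterate_succ_apply', Function.iterate_succ_apply', bes_T hC0 hC, ih]

end BesKit
section SynKit
variable {X : Type} [MetricSpace X] [CompactSpace X] {T : X → X} {C : ℝ}

lemma syn (hC0 : 0 ≤ C) (hC : ∀ a b : X, dist a b ≤ C)
    (hme : MeanEquicontinuous T) {θ : ℝ} (hθ : 0 < θ) (d : ℕ) :
    ∃ L : ℕ, ∀ a : ℕ, ∃ n : ℕ, a ≤ n ∧ n ≤ a + L ∧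
      ∀ p : X, ∀ k ∈ Finset.Icc 1 d, besicovitch T (T^[k * n] p) p ≤ θ := by
  classical
  obtain ⟨δ₀, hδ₀, hmeδ₀⟩ := hme (θ/4) (by linarith)
  obtain ⟨δ, hδ, hmeδ⟩ := hme (θ/2) (by linarith)
  -- net in X
  obtain ⟨t, htfin, htcov⟩ := totallyBounded_iff.mp (isCompact_univ (X := X)).totallyBounded δ₀ hδ₀
  set Q : Finset X := htfin.toFinset with hQ
  have hQcov : ∀ p : X, ∃ q ∈ Q, dist p q ≤ δ₀ := by
    intro p
    have := htcov (mem_univ p)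
    simp only [mem_iUnion] at this
    obtain ⟨q, hq, hpq⟩ := this
    exact ⟨q, by simp [hQ, htfin.mem_toFinset, hq], le_of_lt (mem_ball.mp hpq)⟩
  -- the auxiliary compact product space
  let W := (Fin d × {q // q ∈ Q}) → X
  let V : ℕ → W := fun n ks => T^[((ks.1 : ℕ) + 1) * n] (ks.2 : X)
  obtain ⟨F, hFfin, hFcov⟩ := totallyBounded_iff.mp (isCompact_univ (X := W)).totallyBounded
    (δ/2) (by linarith)
  let τ : W → ℕ := fun c => if h : ∃ n, V n ∈ ball c (δ/2) then h.choose else 0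
  have hτ : ∀ c : W, (∃ m, V m ∈ ball c (δ/2)) → V (τ c) ∈ ball c (δ/2) := by
    intro c h
    simp only [τ, dif_pos h]
    exact h.choose_spec
  let L : ℕ := hFfin.toFinset.sup τ
  refine ⟨L, fun a => ?_⟩
  set n := a + L with hn
  have := hFcov (mem_univ (V n))
  simp only [mem_iUnion] at this
  obtain ⟨c, hcF, hVn⟩ := this
  have hex : ∃ m, V m ∈ ball c (δ/2) := ⟨n, hVn⟩
  set s := τ c with hs
  have hVt : V s ∈ ball c (δ/2) := hτ c hex
  have hsL : s ≤ L := Finset.le_sup (f := τ) (hFfin.mem_toFinset.mpr hcF)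
  refine ⟨n - s, by omega, by omega, ?_⟩
  -- distance of the two configurations
  have hdist : dist (V n) (V s) ≤ δ := by
    calc dist (V n) (V s) ≤ dist (V n) c + dist c (V s) := dist_triangle _ _ _
      _ ≤ δ/2 + δ/2 := by
          refine add_le_add (mem_ball.mp hVn).le ?_
          rw [dist_comm]
          exact (mem_ball.mp hVt).le
      _ = δ := by ring
  have hnet : ∀ q ∈ Q, ∀ k ∈ Finset.Icc 1 d, besicovitch T (T^[k * (n - s)] q) q ≤ θ/2 := by
    intro q hq k hk
    simp only [Finset.mem_Icc] at hk
    have hk1 : k - 1 < d := by omega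
    set ks : Fin d × {q // q ∈ Q} := (⟨k - 1, hk1⟩, ⟨q, hq⟩) with hks
    have hco : dist (V n ks) (V s ks) ≤ δ := le_trans (dist_le_pi_dist (V n) (V s) ks) hdist
    have hcoe : ((ks.1 : ℕ) + 1) = k := by simp [hks]; omega
    have hbes : besicovitch T (T^[k * n] q) (T^[k * s] q) ≤ θ/2 := by
      apply hmeδ
      have : V n ks = T^[k * n] q := by simp [V, hcoe]; rfl
      rw [← this]
      have : V s ks = T^[k * s] q := by simp [V, hcoe]; rfl
      rw [← this]
      exact hco
    have hiter : besicovitch T (T^[k * n] q) (T^[k * s] q)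
        = besicovitch T (T^[k * (n - s)] q) q := by
      have hsplit : k * n = k * s + k * (n - s) := by
        rw [← Nat.mul_add, Nat.add_sub_cancel' (show s ≤ n by omega)]
      rw [hsplit, Function.iterate_add_apply]
      exact bes_iterate hC0 hC _ _ _
    rw [← hiter]
    exact hbes
  intro p k hk
  obtain ⟨q, hq, hpq⟩ := hQcov p
  have h1 : besicovitch T (T^[k * (n - s)] p) (T^[k * (n - s)] q) ≤ θ/4 := by
    rw [bes_iterate hC0 hC]
    exact hmeδ₀ _ _ hpq
  have h2 := hnet q hq k hk
  have h3 : besicovitch T q p ≤ θ/4 := by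
    rw [bes_symm]
    exact hmeδ₀ _ _ hpq
  have t1 := bes_triangle (T := T) hC0 hC (T^[k * (n - s)] p) (T^[k * (n - s)] q) q
  have t2 := bes_triangle (T := T) hC0 hC (T^[k * (n - s)] p) q p
  linarith

end SynKit
section IntKit
variable {X : Type} [MetricSpace X] [CompactSpace X] [MeasurableSpace X] [BorelSpace X]
  {T : X → X} {C : ℝ}

lemma map_iterate (hT : Continuous T) (μ : Measure X) (hinv : Measure.map T μ = μ) (i : ℕ) :
    Measure.map T^[i] μ = μ := by
  induction i with
  | zero => simp [Measure.map_id]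
  | succ i ih =>
      rw [Function.iterate_succ,
        ← Measure.map_map (hT.iterate i).measurable hT.measurable, hinv, ih]

lemma integral_iterate (hT : Continuous T) (μ : Measure X) (hinv : Measure.map T μ = μ)
    (i : ℕ) {g : X → ℝ} (hg : Continuous g) :
    ∫ p, g (T^[i] p) ∂μ = ∫ p, g p ∂μ := by
  conv_rhs => rw [← map_iterate hT μ hinv i]
  rw [integral_map (hT.iterate i).measurable.aemeasurable hg.aestronglyMeasurable]

lemma cont_integrable (μ : Measure X) [IsFiniteMeasure μ] {g : X → ℝ} (hg : Continuous g) :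
    Integrable g μ := by
  rw [← integrableOn_univ]
  exact hg.continuousOn.integrableOn_compact isCompact_univ

lemma int_dist_le (hT : Continuous T) (μ : Measure X) [IsProbabilityMeasure μ]
    (hinv : Measure.map T μ = μ) (hC0 : 0 ≤ C) (hC : ∀ a b : X, dist a b ≤ C)
    {θ : ℝ} (hθ : 0 < θ) (j : ℕ) (hbes : ∀ p : X, besicovitch T (T^[j] p) p ≤ θ) :
    ∫ p, dist (T^[j] p) p ∂μ ≤ θ := by
  classical
  set g : X → ℝ := fun p => dist (T^[j] p) p with hg
  have hgc : Continuous g := (hT.iterate j).dist continuous_id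
  have hgint : Integrable g μ := cont_integrable μ hgc
  set A : ℕ → X → ℝ := fun M p => birkhoffDist T (T^[j] p) p M with hA
  have hAc : ∀ M, Continuous (A M) := by
    intro M
    apply Continuous.div_const
    apply continuous_finset_sum
    intro i _
    exact ((hT.iterate i).comp (hT.iterate j)).dist (hT.iterate i)
  have hAint : ∀ M, Integrable (A M) μ := fun M => cont_integrable μ (hAc M)
  have hAeq : ∀ M : ℕ, 1 ≤ M → ∫ p, A M p ∂μ = ∫ p, g p ∂μ := by
    intro M hM
    have : ∀ p, A M p = (∑ i ∈ Finset.Icc 1 M, dist (T^[j] (T^[i] p)) (T^[i] p)) / M := by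
      intro p
      simp only [hA, birkhoffDist]
      congr 1
      apply Finset.sum_congr rfl
      intro i _
      congr 1
      rw [← Function.iterate_add_apply, ← Function.iterate_add_apply, Nat.add_comm]
    simp_rw [this]
    rw [integral_div]
    rw [integral_finset_sum]
    swap
    · intro i _
      exact cont_integrable μ (Continuous.dist
        (Continuous.comp (hT.iterate j) (hT.iterate i)) (hT.iterate i))
    have : ∀ i ∈ Finset.Icc 1 M, ∫ p, dist (T^[j] (T^[i] p)) (T^[i] p) ∂μ = ∫ p, g p ∂μ := by
      intro i _
      exact integral_iterate hT μ hinv i hgc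
    rw [Finset.sum_congr rfl this, Finset.sum_const, Nat.card_Icc]
    have hM0 : (M:ℝ) ≠ 0 := by positivity
    simp only [Nat.add_sub_cancel, nsmul_eq_mul]
    field_simp
  -- the main estimate
  apply le_of_forall_pos_le_add
  intro ε₀ hε₀
  set E : ℕ → Set X := fun N => ⋂ M : ℕ, {p : X | N ≤ M → A M p ≤ θ + ε₀/2} with hE
  have hEmeas : ∀ N, MeasurableSet (E N) := by
    intro N
    apply MeasurableSet.iInter
    intro M
    by_cases h : N ≤ M
    · simp only [h, forall_true_left]
      exact (isClosed_le (hAc M) continuous_const).measurableSet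
    · simp only [h, false_implies]
      simp [Set.setOf_true]
  have hEmono : Monotone E := by
    intro N N' hNN'
    intro p hp
    simp only [hE, mem_iInter, mem_setOf_eq] at hp ⊢
    intro M hM
    exact hp M (le_trans hNN' hM)
  have hEunion : ⋃ N, E N = univ := by
    apply eq_univ_of_forall
    intro p
    have hlim : atTop.limsup (birkhoffDist T (T^[j] p) p) < θ + ε₀/2 :=
      lt_of_le_of_lt (hbes p) (by linarith)
    have := lk_eventually_lt (bd_le hC0 hC (T^[j] p) p) hlim
    obtain ⟨N, hN⟩ := eventually_atTop.mp this
    refine mem_iUnion.mpr ⟨N, ?_⟩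
    simp only [hE, mem_iInter, mem_setOf_eq]
    intro M hM
    exact (hN M hM).le
  -- measure of complements tends to zero
  have hcompl : Tendsto (fun N => μ (E N)ᶜ) atTop (nhds 0) := by
    have h1 : Tendsto (μ ∘ fun N => (E N)ᶜ) atTop (nhds (μ (⋂ N, (E N)ᶜ))) := by
      apply tendsto_measure_iInter_atTop
        (fun N => (hEmeas N).compl.nullMeasurableSet)
        (fun N N' h => compl_subset_compl.mpr (hEmono h))
        ⟨0, measure_ne_top μ _⟩
    have h2 : (⋂ N, (E N)ᶜ) = ∅ := by
      rw [← compl_iUnion, hEunion, compl_univ]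
    rw [h2] at h1
    simpa [Function.comp_def] using h1
  have hev : ∀ᶠ N in atTop, μ (E N)ᶜ < ENNReal.ofReal (ε₀/(2*(C+1))) := by
    apply hcompl.eventually_lt_const
    simp only [ENNReal.ofReal_pos]
    positivity
  obtain ⟨N, hN⟩ := hev.exists
  -- split the integral at time M = N + 1
  set M := N + 1 with hM
  have hsplit : ∫ p, g p ∂μ = (∫ p in E N, A M p ∂μ) + ∫ p in (E N)ᶜ, A M p ∂μ := by
    rw [← hAeq M (by omega), ← integral_add_compl (hEmeas N) (hAint M)]
  have hb1 : ∫ p in E N, A M p ∂μ ≤ (θ + ε₀/2) * (μ (E N)).toReal := by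
    calc ∫ p in E N, A M p ∂μ ≤ ∫ _p in E N, (θ + ε₀/2) ∂μ := by
          apply setIntegral_mono_on (hAint M).integrableOn (integrableOn_const
            (measure_lt_top μ _).ne) (hEmeas N)
          intro p hp
          simp only [hE, mem_iInter, mem_setOf_eq] at hp
          exact hp M (by omega)
      _ = (μ (E N)).toReal * (θ + ε₀/2) := by rw [setIntegral_const]; simp [Measure.real]
      _ = (θ + ε₀/2) * (μ (E N)).toReal := by ring
  have hb2 : ∫ p in (E N)ᶜ, A M p ∂μ ≤ C * (μ (E N)ᶜ).toReal := by
    calc ∫ p in (E N)ᶜ, A M p ∂μ ≤ ∫ _p in (E N)ᶜ, C ∂μ := by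
          apply setIntegral_mono_on (hAint M).integrableOn (integrableOn_const
            (measure_lt_top μ _).ne) (hEmeas N).compl
          intro p _
          exact bd_le hC0 hC _ _ M
      _ = (μ (E N)ᶜ).toReal * C := by rw [setIntegral_const]; simp [Measure.real]
      _ = C * (μ (E N)ᶜ).toReal := by ring
  have hμE : (μ (E N)).toReal ≤ 1 := by
    have h1 : μ (E N) ≤ 1 := prob_le_one
    exact ENNReal.toReal_le_of_le_ofReal one_pos.le (by simpa using h1)
  have hμEc : (μ (E N)ᶜ).toReal ≤ ε₀/(2*(C+1)) := by
    apply ENNReal.toReal_le_of_le_ofReal (by positivity) hN.le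
  have hθε : 0 < θ + ε₀/2 := by linarith
  have h1 : (θ + ε₀/2) * (μ (E N)).toReal ≤ θ + ε₀/2 := by nlinarith
  have h2 : C * (μ (E N)ᶜ).toReal ≤ ε₀/2 := by
    calc C * (μ (E N)ᶜ).toReal ≤ C * (ε₀/(2*(C+1))) := by
          apply mul_le_mul_of_nonneg_left hμEc hC0
      _ ≤ ε₀/2 := by
          rw [show C * (ε₀/(2*(C+1))) = (C*ε₀)/(2*(C+1)) by ring,
            div_le_div_iff₀ (by positivity) (by norm_num : (0:ℝ) < 2)]
          nlinarith
  calc ∫ p, g p ∂μ ≤ (θ + ε₀/2) * (μ (E N)).toReal + C * (μ (E N)ᶜ).toReal := by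
        rw [hsplit]; exact add_le_add hb1 hb2
    _ ≤ θ + ε₀ := by linarith

end IntKit
section IntKit2
variable {X : Type} [MetricSpace X] [CompactSpace X] [MeasurableSpace X] [BorelSpace X]
  {T : X → X} {C : ℝ}

lemma meas_bad (hT : Continuous T) (μ : Measure X) [IsProbabilityMeasure μ]
    (hinv : Measure.map T μ = μ) (hC0 : 0 ≤ C) (hC : ∀ a b : X, dist a b ≤ C)
    {θ ε' : ℝ} (hθ : 0 < θ) (hε' : 0 < ε') (d n : ℕ)
    (hbes : ∀ p : X, ∀ k ∈ Finset.Icc 1 d, besicovitch T (T^[k*n] p) p ≤ θ) :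
    μ {p : X | ∃ k ∈ Finset.Icc 1 d, ε' ≤ dist (T^[k*n] p) p}
      ≤ ENNReal.ofReal (d * (θ/ε')) := by
  have hsub : {p : X | ∃ k ∈ Finset.Icc 1 d, ε' ≤ dist (T^[k*n] p) p}
      ⊆ ⋃ k ∈ Finset.Icc 1 d, {p : X | ε' ≤ dist (T^[k*n] p) p} := by
    intro p hp
    obtain ⟨k, hk1, hk2⟩ := hp
    exact mem_biUnion hk1 hk2
  refine le_trans (measure_mono hsub) ?_
  refine le_trans (measure_biUnion_finset_le _ _) ?_
  have hone : ∀ k ∈ Finset.Icc 1 d,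
      μ {p : X | ε' ≤ dist (T^[k*n] p) p} ≤ ENNReal.ofReal (θ/ε') := by
    intro k hk
    have hint := int_dist_le hT μ hinv hC0 hC hθ (k*n) (fun p => hbes p k hk)
    have hmark := mul_meas_ge_le_integral_of_nonneg
      (Eventually.of_forall (fun p => dist_nonneg))
      (cont_integrable μ ((hT.iterate (k*n)).dist continuous_id)) ε'
    have h2 : (μ {p : X | ε' ≤ dist (T^[k*n] p) p}).toReal ≤ θ/ε' := by
      rw [le_div_iff₀ hε']
      calc (μ {p : X | ε' ≤ dist (T^[k*n] p) p}).toReal * ε'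
          = ε' * (μ {p : X | ε' ≤ dist (T^[k*n] p) p}).toReal := by ring
        _ ≤ ∫ p, dist (T^[k*n] p) p ∂μ := hmark
        _ ≤ θ := hint
    exact (ENNReal.le_ofReal_iff_toReal_le (measure_ne_top μ _) (by positivity)).mpr h2
  calc ∑ k ∈ Finset.Icc 1 d, μ {p : X | ε' ≤ dist (T^[k*n] p) p}
      ≤ ∑ _k ∈ Finset.Icc 1 d, ENNReal.ofReal (θ/ε') := Finset.sum_le_sum hone
    _ = (d : ENNReal) * ENNReal.ofReal (θ/ε') := by
        rw [Finset.sum_const, Nat.card_Icc, Nat.add_sub_cancel, nsmul_eq_mul]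
    _ = ENNReal.ofReal (d * (θ/ε')) := by
        rw [ENNReal.ofReal_mul (by positivity : (0:ℝ) ≤ (d:ℝ))]
        congr 1
        exact (ENNReal.ofReal_natCast d).symm

end IntKit2
open Classical in
/-- number of `n < N` which are `ε'`-multiple-return times for `x` up to power `d`. -/
noncomputable def retCount {X : Type} [MetricSpace X] (T : X → X) (d : ℕ) (ε' : ℝ)
    (x : X) (N : ℕ) : ℕ :=
  ((Finset.range N).filter
    (fun n => ∀ k ∈ Finset.Icc 1 d, dist (T^[k*n] x) x ≤ ε')).card

section GoodKit
variable {X : Type} [MetricSpace X] [CompactSpace X] [MeasurableSpace X] [BorelSpace X]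
  {T : X → X} {C : ℝ}

lemma good_full (hT : Continuous T) (hme : MeanEquicontinuous T) (μ : Measure X)
    [IsProbabilityMeasure μ] (hinv : Measure.map T μ = μ)
    (hC0 : 0 ≤ C) (hC : ∀ a b : X, dist a b ≤ C) (d : ℕ) {ε' : ℝ} (hε' : 0 < ε') :
    ∃ S : Set X, MeasurableSet S ∧ μ S = 1 ∧
      ∀ x ∈ S, ∃ c : ℝ, 0 < c ∧ ∀ N₀ : ℕ, ∃ N, N₀ ≤ N ∧ 1 ≤ N ∧
        c * N ≤ (retCount T d ε' x N : ℝ) := by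
  classical
  -- for each r we build a measurable set of measure ≥ 1 - 2/(r+1) of good points
  have main : ∀ r : ℕ, ∃ S : Set X, MeasurableSet S ∧
      μ Sᶜ ≤ 2 * ENNReal.ofReal (1/(r+1)) ∧
      ∀ x ∈ S, ∃ c : ℝ, 0 < c ∧ ∀ N₀ : ℕ, ∃ N, N₀ ≤ N ∧ 1 ≤ N ∧
        c * N ≤ (retCount T d ε' x N : ℝ) := by
    intro r
    set η : ℝ := 1/(r+1) with hη
    have hηpos : 0 < η := by positivity
    set θ : ℝ := ε' * η / (d+1) with hθdef
    have hθpos : 0 < θ := by positivity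
    obtain ⟨L, hL⟩ := syn hC0 hC hme hθpos d
    -- choose the syndetic sequence of return times
    choose nn hn1 hn2 hn3 using fun j : ℕ => hL (j * (L+1))
    have hnlt : ∀ j : ℕ, nn j < (j+1) * (L+1) := by
      intro j
      have := hn2 j
      nlinarith [hn1 j]
    have hnmono : StrictMono nn := by
      apply strictMono_nat_of_lt_succ
      intro j
      have h1 := hnlt j
      have h2 := hn1 (j+1)
      omega
    -- the sets of points which return well at time `nn j`
    set P : ℕ → Set X := fun j =>
      {p : X | ∀ k ∈ Finset.Icc 1 d, dist (T^[k * nn j] p) p ≤ ε'} with hP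
    have hPmeas : ∀ j, MeasurableSet (P j) := by
      intro j
      have : P j = ⋂ k ∈ Finset.Icc 1 d, {p : X | dist (T^[k * nn j] p) p ≤ ε'} := by
        ext p; simp [hP]
      rw [this]
      apply MeasurableSet.biInter (Finset.Icc 1 d).countable_toSet
      intro k _
      exact (isClosed_le ((hT.iterate (k * nn j)).dist continuous_id) continuous_const).measurableSet
    have hPbad : ∀ j, μ (P j)ᶜ ≤ ENNReal.ofReal η := by
      intro j
      have hsub : (P j)ᶜ ⊆ {p : X | ∃ k ∈ Finset.Icc 1 d, ε' ≤ dist (T^[k * nn j] p) p} := by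
        intro p hp
        simp only [hP, mem_compl_iff, mem_setOf_eq, not_forall] at hp
        obtain ⟨k, hk, hklt⟩ := hp
        exact ⟨k, hk, le_of_lt (lt_of_not_ge hklt)⟩
      refine le_trans (measure_mono hsub) ?_
      refine le_trans (meas_bad hT μ hinv hC0 hC hθpos hε' d (nn j) (fun p k hk => hn3 j p k hk)) ?_
      apply ENNReal.ofReal_le_ofReal
      have hd1 : (0:ℝ) < (d:ℝ)+1 := by positivity
      rw [hθdef]
      have heq : (d:ℝ) * (ε' * η / ((d:ℝ)+1) / ε') = η * ((d:ℝ) / ((d:ℝ)+1)) := by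
        field_simp
      rw [heq]
      have h1 : (d:ℝ)/((d:ℝ)+1) ≤ 1 := by
        rw [div_le_one hd1]
        linarith
      nlinarith
    -- counting functions
    set gc : ℕ → X → ℕ := fun J x => ((Finset.range J).filter (fun j => x ∈ P j)).card with hgc
    have hgceq : ∀ J x, gc J x = ∑ j ∈ Finset.range J, if x ∈ P j then 1 else 0 := by
      intro J x
      exact Finset.card_filter _ _
    have hgcmeas : ∀ J, Measurable (gc J) := by
      intro J
      have : gc J = fun x => ∑ j ∈ Finset.range J, if x ∈ P j then 1 else 0 := by
        funext x
        exact hgceq J x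
      rw [this]
      exact Finset.measurable_sum _
        (fun j _ => Measurable.ite (hPmeas j) measurable_const measurable_const)
    set A : ℕ → Set X := fun J => {x : X | J ≤ 2 * gc J x} with hA
    have hAmeas : ∀ J, MeasurableSet (A J) := by
      intro J
      have : A J = (gc J) ⁻¹' {m : ℕ | J ≤ 2 * m} := by ext x; simp [hA]
      rw [this]
      exact (hgcmeas J) (MeasurableSet.of_discrete)
    have hAbad : ∀ J : ℕ, 1 ≤ J → μ (A J)ᶜ ≤ 2 * ENNReal.ofReal η := by
      intro J hJ
      set b : X → ENNReal := fun x => ∑ j ∈ Finset.range J, ((P j)ᶜ).indicator 1 x with hb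
      have hbmeas : Measurable b :=
        Finset.measurable_sum _ (fun j _ => measurable_one.indicator (hPmeas j).compl)
      have hint : ∫⁻ x, b x ∂μ = ∑ j ∈ Finset.range J, μ (P j)ᶜ := by
        rw [hb, lintegral_finset_sum _ (fun j _ => measurable_one.indicator (hPmeas j).compl)]
        apply Finset.sum_congr rfl
        intro j _
        rw [lintegral_indicator_one (hPmeas j).compl]
      have hptwise : ∀ x, (J : ENNReal) * ((A J)ᶜ).indicator 1 x ≤ 2 * b x := by
        intro x
        by_cases hx : x ∈ (A J)ᶜ
        · rw [Set.indicator_of_mem hx]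
          simp only [Pi.one_apply, mul_one]
          have hx' : ¬ J ≤ 2 * gc J x := hx
          have hsplit : gc J x + ((Finset.range J).filter (fun j => x ∉ P j)).card = J := by
            rw [hgc]
            simp only []
            rw [Finset.card_filter_add_card_filter_not (p := fun j => x ∈ P j),
              Finset.card_range]
          have hbx : b x = (((Finset.range J).filter (fun j => x ∉ P j)).card : ENNReal) := by
            rw [hb]
            simp only [Set.indicator_apply, mem_compl_iff, Pi.one_apply]
            rw [Finset.sum_boole]
          rw [hbx]
          have hnat : J ≤ 2 * ((Finset.range J).filter (fun j => x ∉ P j)).card := by omega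
          calc (J : ENNReal) ≤ ((2 * ((Finset.range J).filter (fun j => x ∉ P j)).card : ℕ) : ENNReal) := by
                exact_mod_cast hnat
            _ = 2 * (((Finset.range J).filter (fun j => x ∉ P j)).card : ENNReal) := by push_cast; ring
        · rw [Set.indicator_of_notMem hx, mul_zero]
          exact zero_le'
      have hle := lintegral_mono (μ := μ) (fun x => hptwise x)
      rw [lintegral_const_mul _ (measurable_one.indicator (hAmeas J).compl),
        lintegral_indicator_one (hAmeas J).compl,
        lintegral_const_mul _ hbmeas, hint] at hle
      have h2 : ∑ j ∈ Finset.range J, μ (P j)ᶜ ≤ (J : ENNReal) * ENNReal.ofReal η := by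
        calc ∑ j ∈ Finset.range J, μ (P j)ᶜ ≤ ∑ _j ∈ Finset.range J, ENNReal.ofReal η :=
              Finset.sum_le_sum (fun j _ => hPbad j)
          _ = (J : ENNReal) * ENNReal.ofReal η := by
              rw [Finset.sum_const, Finset.card_range, nsmul_eq_mul]
      have h3 : (J : ENNReal) * μ (A J)ᶜ ≤ (J : ENNReal) * (2 * ENNReal.ofReal η) := by
        calc (J : ENNReal) * μ (A J)ᶜ ≤ 2 * ((J : ENNReal) * ENNReal.ofReal η) := by
              refine le_trans hle ?_
              exact mul_le_mul_right h2 2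
          _ = (J : ENNReal) * (2 * ENNReal.ofReal η) := by ring
      have hJ0 : (J : ENNReal) ≠ 0 := by
        simp only [ne_eq, Nat.cast_eq_zero]
        omega
      exact (ENNReal.mul_le_mul_iff_right hJ0 (ENNReal.natCast_ne_top J)).mp h3
    -- the limsup set
    set S : Set X := ⋂ J₀ : ℕ, ⋃ J : ℕ, ⋃ (_ : J₀ ≤ J ∧ 1 ≤ J), A J with hS
    have hSmeas : MeasurableSet S :=
      MeasurableSet.iInter (fun J₀ => MeasurableSet.iUnion (fun J =>
        MeasurableSet.iUnion (fun _ => hAmeas J)))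
    refine ⟨S, hSmeas, ?_, ?_⟩
    · -- measure of the complement
      have hcompl : Sᶜ = ⋃ J₀ : ℕ, ⋂ J : ℕ, ⋂ (_ : J₀ ≤ J ∧ 1 ≤ J), (A J)ᶜ := by
        rw [hS]
        simp [compl_iInter, compl_iUnion]
      rw [hcompl]
      have hmono : Monotone (fun J₀ : ℕ => ⋂ J : ℕ, ⋂ (_ : J₀ ≤ J ∧ 1 ≤ J), (A J)ᶜ) := by
        intro a b hab
        apply iInter_mono
        intro J
        apply iInter_mono'
        intro h
        exact ⟨⟨le_trans hab h.1, h.2⟩, subset_rfl⟩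
      rw [hmono.directed_le.measure_iUnion]
      apply iSup_le
      intro J₀
      refine le_trans (measure_mono ?_) (hAbad (max J₀ 1) (le_max_right _ _))
      exact iInter_subset_of_subset (max J₀ 1)
        (iInter_subset_of_subset ⟨le_max_left _ _, le_max_right _ _⟩ subset_rfl)
    · -- goodness of points of S
      intro x hx
      refine ⟨1/(4*(L+1)), by positivity, ?_⟩
      intro N₀
      have hx' := mem_iInter.mp hx (N₀ + 1)
      obtain ⟨J, hJprop⟩ := mem_iUnion.mp hx'
      rw [mem_iUnion] at hJprop
      obtain ⟨⟨hJ1, hJ2⟩, hJA⟩ := hJprop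
      have hcount : J ≤ 2 * gc J x := hJA
      refine ⟨J * (L+1), ?_, ?_, ?_⟩
      · calc N₀ ≤ N₀ + 1 := by omega
          _ ≤ J := hJ1
          _ ≤ J * (L+1) := by nlinarith
      · nlinarith
      · -- count the returns
        have hinj : ∀ j ∈ (Finset.range J).filter (fun j => x ∈ P j),
            nn j ∈ (Finset.range (J * (L+1))).filter
              (fun n => ∀ k ∈ Finset.Icc 1 d, dist (T^[k*n] x) x ≤ ε') := by
          intro j hj
          simp only [Finset.mem_filter, Finset.mem_range] at hj ⊢
          constructor
          · calc nn j < (j+1) * (L+1) := hnlt j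
              _ ≤ J * (L+1) := by
                have : j + 1 ≤ J := hj.1
                exact Nat.mul_le_mul_right _ this
          · exact hj.2
        have hcard : gc J x ≤ retCount T d ε' x (J * (L+1)) := by
          rw [hgc]
          unfold retCount
          apply Finset.card_le_card_of_injOn nn hinj
          intro a _ b _ hab
          exact hnmono.injective hab
        have h4 : (J : ℝ) ≤ 2 * gc J x := by exact_mod_cast hcount
        have h5 : (gc J x : ℝ) ≤ retCount T d ε' x (J * (L+1)) := by exact_mod_cast hcard
        have hL1 : (0:ℝ) < 4*((L:ℝ)+1) := by positivity
        rw [div_mul_eq_mul_div, div_le_iff₀ hL1]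
        push_cast
        nlinarith
  -- combine over all r
  choose Sr hSrmeas hSrbad hSrgood using main
  have hSmeas : MeasurableSet (⋃ r : ℕ, Sr r) := MeasurableSet.iUnion hSrmeas
  refine ⟨⋃ r : ℕ, Sr r, hSmeas, ?_, ?_⟩
  · rw [← prob_compl_eq_zero_iff hSmeas]
    have hb : ∀ r : ℕ, (μ (⋃ r', Sr r')ᶜ).toReal ≤ 2 * (1/((r:ℝ)+1)) := by
      intro r
      have h1 : μ (⋃ r', Sr r')ᶜ ≤ 2 * ENNReal.ofReal (1/((r:ℝ)+1)) := by
        refine le_trans (measure_mono (compl_subset_compl.mpr (subset_iUnion Sr r))) ?_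
        exact_mod_cast hSrbad r
      have h2 : (2 * ENNReal.ofReal (1/((r:ℝ)+1))).toReal = 2 * (1/((r:ℝ)+1)) := by
        rw [ENNReal.toReal_mul, ENNReal.toReal_ofReal (by positivity)]
        simp
      rw [← h2]
      exact ENNReal.toReal_mono (by
        apply ENNReal.mul_ne_top (by norm_num) ENNReal.ofReal_ne_top) h1
    have htend : Tendsto (fun r : ℕ => 2 * (1/((r:ℝ)+1))) atTop (nhds 0) := by
      have := tendsto_one_div_add_atTop_nhds_zero_nat.const_mul (2:ℝ)
      simpa using this
    have hle0 : (μ (⋃ r', Sr r')ᶜ).toReal ≤ 0 := ge_of_tendsto' htend hb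
    have h0 : (μ (⋃ r', Sr r')ᶜ).toReal = 0 := le_antisymm hle0 ENNReal.toReal_nonneg
    rw [ENNReal.toReal_eq_zero_iff] at h0
    rcases h0 with h0 | h0
    · exact h0
    · exact absurd h0 (measure_ne_top μ _)
  · intro x hx
    obtain ⟨r, hr⟩ := mem_iUnion.mp hx
    exact hSrgood r x hr

end GoodKit
section CountKit
variable {X : Type} [MetricSpace X] {T : X → X} {C : ℝ}

open Classical in
lemma bad_count (hC0 : 0 ≤ C) (hC : ∀ a b : X, dist a b ≤ C)
    {a b : X} {θ ε₁ : ℝ} (hθ : 0 < θ) (hε₁ : 0 < ε₁)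
    (hbes : besicovitch T a b ≤ θ) :
    ∃ N₁ : ℕ, ∀ N : ℕ, N₁ ≤ N →
      (((Finset.Icc 1 N).filter
        (fun i => ε₁ < dist (T^[i] a) (T^[i] b))).card : ℝ) ≤ (2*θ/ε₁) * N := by
  have hev : ∀ᶠ N in atTop, birkhoffDist T a b N < 2*θ :=
    lk_eventually_lt (bd_le hC0 hC a b) (lt_of_le_of_lt hbes (by linarith))
  obtain ⟨N₁, hN₁⟩ := eventually_atTop.mp hev
  refine ⟨N₁ + 1, fun N hN => ?_⟩
  have hN1 : 1 ≤ N := by omega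
  have hNpos : (0:ℝ) < N := by exact_mod_cast hN1
  have hbk := hN₁ N (by omega)
  have hsum : birkhoffDist T a b N
      = (∑ i ∈ Finset.Icc 1 N, dist (T^[i] a) (T^[i] b)) / N := rfl
  have hSbound : ∑ i ∈ Finset.Icc 1 N, dist (T^[i] a) (T^[i] b) < 2*θ*N := by
    rw [hsum, div_lt_iff₀ hNpos] at hbk
    linarith
  have hfilter : (((Finset.Icc 1 N).filter
      (fun i => ε₁ < dist (T^[i] a) (T^[i] b))).card : ℝ) * ε₁
      ≤ ∑ i ∈ Finset.Icc 1 N, dist (T^[i] a) (T^[i] b) := by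
    calc (((Finset.Icc 1 N).filter (fun i => ε₁ < dist (T^[i] a) (T^[i] b))).card : ℝ) * ε₁
        = ∑ _i ∈ (Finset.Icc 1 N).filter (fun i => ε₁ < dist (T^[i] a) (T^[i] b)), ε₁ := by
          rw [Finset.sum_const, nsmul_eq_mul]
      _ ≤ ∑ i ∈ (Finset.Icc 1 N).filter (fun i => ε₁ < dist (T^[i] a) (T^[i] b)),
            dist (T^[i] a) (T^[i] b) := by
          apply Finset.sum_le_sum
          intro i hi
          exact (Finset.mem_filter.mp hi).2.le
      _ ≤ ∑ i ∈ Finset.Icc 1 N, dist (T^[i] a) (T^[i] b) := by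
          apply Finset.sum_le_sum_of_subset_of_nonneg (Finset.filter_subset _ _)
          intro i _ _
          exact dist_nonneg
  have := lt_of_le_of_lt hfilter hSbound
  rw [div_mul_eq_mul_div, le_div_iff₀ hε₁]
  nlinarith

end CountKit
set_option maxHeartbeats 2000000 in
/-- Furstenberg's question for minimal mean equicontinuous systems:
there is a full-measure Borel set of points whose diagonal is minimal for
`T × T² × … × T^d`, for every `d`. -/
theorem furstenberg_question_meanEquicontinuous
    {X : Type} [MetricSpace X] [CompactSpace X] [MeasurableSpace X] [BorelSpace X]
    (T : X → X) (hT : Continuous T) (hmin : IsMinimalTDS T) (hme : MeanEquicontinuous T)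
    (μ : Measure X) [IsProbabilityMeasure μ] (hinv : Measure.map T μ = μ)
    (huniq : ∀ μ' : Measure X, IsProbabilityMeasure μ' → Measure.map T μ' = μ' → μ' = μ) :
    ∃ X₀ : Set X, MeasurableSet X₀ ∧ μ X₀ = 1 ∧
      ∀ d : ℕ, 0 < d → ∀ x ∈ X₀,
        ∀ z ∈ closure (Set.range fun n : ℕ =>
            (fun v : Fin d → X => fun i => T^[(i : ℕ) + 1] (v i))^[n] fun _ => x),
          closure (Set.range fun n : ℕ =>
              (fun v : Fin d → X => fun i => T^[(i : ℕ) + 1] (v i))^[n] z)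
            = closure (Set.range fun n : ℕ =>
                (fun v : Fin d → X => fun i => T^[(i : ℕ) + 1] (v i))^[n] fun _ => x) := by
  classical
  obtain ⟨C', hC'⟩ := Metric.isBounded_iff.mp (isCompact_univ (X := X)).isBounded
  set C := max C' 0 with hCdef
  have hC0 : 0 ≤ C := le_max_right _ _
  have hC : ∀ a b : X, dist a b ≤ C := fun a b =>
    le_trans (hC' (mem_univ a) (mem_univ b)) (le_max_left _ _)
  have hgood : ∀ dm : ℕ × ℕ, ∃ S : Set X, MeasurableSet S ∧ μ S = 1 ∧
      ∀ x ∈ S, ∃ c : ℝ, 0 < c ∧ ∀ N₀ : ℕ, ∃ N, N₀ ≤ N ∧ 1 ≤ N ∧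
        c * N ≤ (retCount T dm.1 (1/(dm.2+1)) x N : ℝ) :=
    fun dm => good_full hT hme μ hinv hC0 hC dm.1 (by positivity)
  choose S0 hS0meas hS0full hS0good using hgood
  have hX₀meas : MeasurableSet (⋂ dm : ℕ × ℕ, S0 dm) :=
    MeasurableSet.iInter (fun dm => hS0meas dm)
  refine ⟨⋂ dm : ℕ × ℕ, S0 dm, hX₀meas, ?_, ?_⟩
  · rw [← prob_compl_eq_zero_iff hX₀meas, compl_iInter]
    exact measure_iUnion_null
      (fun dm => (prob_compl_eq_zero_iff (hS0meas dm)).mpr (hS0full dm))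
  · intro d hd x hx z hz
    set F : (Fin d → X) → Fin d → X := fun v : Fin d → X => fun i => T^[(i : ℕ) + 1] (v i)
      with hF
    have hFcont : Continuous F :=
      continuous_pi (fun i => (hT.iterate ((i:ℕ)+1)).comp (continuous_apply i))
    have hFiter : ∀ (n : ℕ) (v : Fin d → X) (i : Fin d),
        F^[n] v i = T^[((i:ℕ)+1)*n] (v i) := by
      intro n
      induction n with
      | zero => intro v i; simp
      | succ n ih =>
          intro v i
          rw [Function.iterate_succ_apply, ih]
          show T^[((i:ℕ)+1)*n] (T^[(i:ℕ)+1] (v i)) = _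
          rw [← Function.iterate_add_apply]
          have heq : ((i:ℕ)+1)*n + ((i:ℕ)+1) = ((i:ℕ)+1)*(n+1) := by ring
          rw [heq]
    have hsubset : ∀ w y : Fin d → X, y ∈ closure (range fun n : ℕ => F^[n] w) →
        closure (range fun n : ℕ => F^[n] y) ⊆ closure (range fun n : ℕ => F^[n] w) := by
      intro w y hy
      have hmaps : MapsTo F (closure (range fun n : ℕ => F^[n] w))
          (closure (range fun n : ℕ => F^[n] w)) := by
        have h1 : MapsTo F (range fun n : ℕ => F^[n] w) (range fun n : ℕ => F^[n] w) := by
          rintro _ ⟨n, rfl⟩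
          exact ⟨n+1, Function.iterate_succ_apply' F n w⟩
        exact h1.closure hFcont
      have hiter : ∀ n : ℕ, F^[n] y ∈ closure (range fun n : ℕ => F^[n] w) := by
        intro n
        induction n with
        | zero => simpa using hy
        | succ n ih => rw [Function.iterate_succ_apply']; exact hmaps ih
      apply closure_minimal ?_ isClosed_closure
      rintro _ ⟨n, rfl⟩
      exact hiter n
    have hkey : (fun _ : Fin d => x) ∈ closure (range fun n : ℕ => F^[n] z) := by
      rw [Metric.mem_closure_iff]
      intro ε hε
      obtain ⟨m', hm'⟩ := exists_nat_one_div_lt (show (0:ℝ) < ε/4 by linarith)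
      have hxS := mem_iInter.mp hx (d, m')
      obtain ⟨c, hc, hgoodx⟩ := hS0good (d, m') x hxS
      set ε' : ℝ := 1/((m':ℝ)+1) with hε'def
      have hε'pos : 0 < ε' := by positivity
      have hε'le : ε' ≤ ε/4 := le_of_lt hm'
      set θ : ℝ := c * (ε/4) / (16*(d:ℝ)*(d:ℝ)+1) with hθdef
      have hθpos : 0 < θ := by positivity
      obtain ⟨δθ, hδθpos, hδθ⟩ := hme θ hθpos
      obtain ⟨w, hwmem, hwdist⟩ := Metric.mem_closure_iff.mp hz δθ hδθpos
      obtain ⟨ma, hma⟩ := hwmem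
      have happrox : ∀ i : Fin d, besicovitch T (z i) (T^[((i:ℕ)+1)*ma] x) ≤ θ := by
        intro i
        apply hδθ
        have h1 := dist_le_pi_dist z (F^[ma] (fun _ : Fin d => x)) i
        rw [hFiter ma (fun _ : Fin d => x) i] at h1
        refine le_trans h1 ?_
        have h2 : dist z (F^[ma] fun _ : Fin d => x) = dist z w := by rw [← hma]
        rw [h2]
        exact hwdist.le
      choose N₁ hN₁ using fun i : Fin d => bad_count (T := T) hC0 hC hθpos
        (show (0:ℝ) < ε/4 by linarith) (happrox i)
      set Nmax : ℕ := Finset.univ.sup N₁ with hNmaxdef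
      obtain ⟨Kc, hKc⟩ := exists_nat_ge (((ma:ℝ) + d + 1) * 8 / (7*c))
      obtain ⟨Ng, hNg1, hNg2, hNg3⟩ := hgoodx (Nmax + ma + Kc + 1)
      set NN : ℕ := Ng - ma with hNNdef
      have hNgeq : NN + ma = Ng := by omega
      have hNNge : Nmax + Kc + 1 ≤ NN := by omega
      set GoodF : Finset ℕ := (Finset.range NN).filter
        (fun n => ∀ k ∈ Finset.Icc 1 d, dist (T^[k*(n+ma)] x) x ≤ ε') with hGoodFdef
      set BadF : Fin d → Finset ℕ := fun i => (Finset.range NN).filter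
        (fun n => ε/4 < dist (T^[((i:ℕ)+1)*n] (z i)) (T^[((i:ℕ)+1)*n] (T^[((i:ℕ)+1)*ma] x)))
        with hBadFdef
      have hGoodcard : c * Ng - ma ≤ (GoodF.card : ℝ) := by
        set RetF : Finset ℕ := (Finset.range Ng).filter
          (fun n => ∀ k ∈ Finset.Icc 1 d, dist (T^[k*n] x) x ≤ ε') with hRetFdef
        have hret : retCount T d ε' x Ng = RetF.card := by
          unfold retCount
          rw [hRetFdef]
        have hmap : (RetF.filter (fun n => ma ≤ n)).card ≤ GoodF.card := by
          apply Finset.card_le_card_of_injOn (fun n => n - ma)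
          · intro n hn
            simp only [hRetFdef, Finset.mem_coe, Finset.mem_filter, Finset.mem_range] at hn
            obtain ⟨⟨hn1, hn2⟩, hn3⟩ := hn
            simp only [hGoodFdef, Finset.mem_coe, Finset.mem_filter, Finset.mem_range]
            constructor
            · omega
            · intro k hk
              have heq2 : n - ma + ma = n := by omega
              rw [heq2]
              exact hn2 k hk
          · intro a ha b hb hab
            simp only [Finset.mem_coe, Finset.mem_filter] at ha hb
            have ha2 := ha.2
            have hb2 := hb.2
            have hab2 : a - ma = b - ma := hab
            omega
        have hcount := hNg3
        rw [hret] at hcount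
        have h1 : (RetF.card : ℝ) ≤ (GoodF.card : ℝ) + ma := by
          have hnat : RetF.card ≤ GoodF.card + ma := by
            have hsub : RetF ⊆ (RetF.filter (fun n => ma ≤ n)) ∪ Finset.range ma := by
              intro n hn
              by_cases h : ma ≤ n
              · exact Finset.mem_union_left _ (Finset.mem_filter.mpr ⟨hn, h⟩)
              · exact Finset.mem_union_right _ (Finset.mem_range.mpr (by omega))
            have h6 := le_trans (Finset.card_le_card hsub) (Finset.card_union_le _ _)
            have h5 := Finset.card_range ma
            omega
          exact_mod_cast hnat
        linarith
      have hfrac0 : (0:ℝ) ≤ 2*c/(16*(d:ℝ)*(d:ℝ)+1) := by positivity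
      have hθfrac : 2*θ/(ε/4) = 2*c/(16*(d:ℝ)*(d:ℝ)+1) := by
        rw [hθdef]
        field_simp
      have hBadcard : ∀ i : Fin d,
          ((BadF i).card : ℝ) ≤ 2*c/(16*(d:ℝ)*(d:ℝ)+1) * ((d:ℝ) * NN) + 1 := by
        intro i
        have hmap : ((BadF i).filter (fun n => 1 ≤ n)).card ≤
            ((Finset.Icc 1 (((i:ℕ)+1)*NN)).filter
              (fun j => ε/4 < dist (T^[j] (z i)) (T^[j] (T^[((i:ℕ)+1)*ma] x)))).card := by
          apply Finset.card_le_card_of_injOn (fun n => ((i:ℕ)+1) * n)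
          · intro n hn
            simp only [hBadFdef, Finset.mem_coe, Finset.mem_filter, Finset.mem_range] at hn
            obtain ⟨⟨hn1, hn2⟩, hn3⟩ := hn
            simp only [Finset.mem_coe, Finset.mem_filter, Finset.mem_Icc]
            refine ⟨⟨Nat.mul_pos (by omega) hn3, Nat.mul_le_mul_left _ (by omega)⟩, hn2⟩
          · intro a _ b _ hab
            have hab2 : ((i:ℕ)+1) * a = ((i:ℕ)+1) * b := hab
            exact Nat.eq_of_mul_eq_mul_left (by omega) hab2
        have hNle : N₁ i ≤ ((i:ℕ)+1)*NN := by
          have h1 : N₁ i ≤ Nmax := Finset.le_sup (Finset.mem_univ i)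
          have h2 : NN ≤ ((i:ℕ)+1)*NN := Nat.le_mul_of_pos_left _ (by omega)
          omega
        have hbound := hN₁ i (((i:ℕ)+1)*NN) hNle
        rw [hθfrac] at hbound
        have hiNd : (((i:ℕ):ℝ)+1) * (NN:ℝ) ≤ (d:ℝ) * NN := by
          have : ((i:ℕ):ℝ)+1 ≤ (d:ℝ) := by
            have := i.isLt
            exact_mod_cast this
          exact mul_le_mul_of_nonneg_right this (by positivity)
        have hcast : ((((i:ℕ)+1)*NN : ℕ) : ℝ) = (((i:ℕ):ℝ)+1) * (NN:ℝ) := by push_cast; ring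
        rw [hcast] at hbound
        have h2 : ((((BadF i).filter (fun n => 1 ≤ n)).card : ℕ) : ℝ)
            ≤ 2*c/(16*(d:ℝ)*(d:ℝ)+1) * ((d:ℝ) * NN) := by
          refine le_trans ?_ (le_trans hbound ?_)
          · exact_mod_cast hmap
          · exact mul_le_mul_of_nonneg_left hiNd hfrac0
        have h3 : ((BadF i).card : ℝ) ≤ (((BadF i).filter (fun n => 1 ≤ n)).card : ℝ) + 1 := by
          have hnat : (BadF i).card ≤ ((BadF i).filter (fun n => 1 ≤ n)).card + 1 := by
            have hsub3 : BadF i ⊆ ((BadF i).filter (fun n => 1 ≤ n)) ∪ {0} := by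
              intro n hn
              rcases Nat.eq_zero_or_pos n with h | h
              · simp [h]
              · exact Finset.mem_union_left _ (Finset.mem_filter.mpr ⟨hn, h⟩)
            have h6 := le_trans (Finset.card_le_card hsub3) (Finset.card_union_le _ _)
            simp only [Finset.card_singleton] at h6
            omega
          exact_mod_cast hnat
        linarith
      have hex : ∃ n ∈ GoodF, ∀ i : Fin d, n ∉ BadF i := by
        by_contra hcon
        push_neg at hcon
        have hsub2 : GoodF ⊆ Finset.univ.biUnion BadF := by
          intro n hn
          obtain ⟨i, hi⟩ := hcon n hn
          exact Finset.mem_biUnion.mpr ⟨i, Finset.mem_univ i, hi⟩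
        have hcard2 : (GoodF.card : ℝ) ≤ ∑ i : Fin d, ((BadF i).card : ℝ) := by
          have h := le_trans (Finset.card_le_card hsub2) (Finset.card_biUnion_le)
          push_cast
          exact_mod_cast h
        have hsum : ∑ i : Fin d, ((BadF i).card : ℝ)
            ≤ (d:ℝ) * (2*c/(16*(d:ℝ)*(d:ℝ)+1) * ((d:ℝ)*NN) + 1) := by
          calc ∑ i : Fin d, ((BadF i).card : ℝ)
              ≤ ∑ _i : Fin d, (2*c/(16*(d:ℝ)*(d:ℝ)+1) * ((d:ℝ)*NN) + 1) :=
                Finset.sum_le_sum (fun i _ => hBadcard i)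
            _ = (d:ℝ) * (2*c/(16*(d:ℝ)*(d:ℝ)+1) * ((d:ℝ)*NN) + 1) := by
                rw [Finset.sum_const, Finset.card_univ, Fintype.card_fin, nsmul_eq_mul]
        have hd1 : (1:ℝ) ≤ (d:ℝ) := by exact_mod_cast hd
        have hNg' : (NN:ℝ) + (ma:ℝ) = (Ng:ℝ) := by exact_mod_cast hNgeq
        have hKcNN : ((ma:ℝ) + (d:ℝ) + 1) ≤ 7/8 * (c * NN) := by
          have h1 : ((ma:ℝ)+(d:ℝ)+1) * 8 / (7*c) ≤ (Kc:ℝ) := hKc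
          have h2 : (Kc:ℝ) ≤ (NN:ℝ) := by exact_mod_cast (show Kc ≤ NN by omega)
          rw [div_le_iff₀ (by positivity : (0:ℝ) < 7*c)] at h1
          nlinarith
        have hNN0 : (0:ℝ) ≤ (NN:ℝ) := by positivity
        have hdd : (d:ℝ) * (2*c/(16*(d:ℝ)*(d:ℝ)+1) * ((d:ℝ)*NN)) ≤ 1/8 * (c * NN) := by
          have h16 : (0:ℝ) < 16*(d:ℝ)*(d:ℝ)+1 := by positivity
          have hid : (d:ℝ) * (2*c/(16*(d:ℝ)*(d:ℝ)+1) * ((d:ℝ)*NN))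
              = (2*c*(d:ℝ)*(d:ℝ)*(NN:ℝ))/(16*(d:ℝ)*(d:ℝ)+1) := by ring
          rw [hid, div_le_iff₀ h16]
          have hcNN0 : (0:ℝ) ≤ c * NN := mul_nonneg hc.le hNN0
          nlinarith [mul_nonneg hcNN0 (mul_nonneg (by positivity : (0:ℝ) ≤ (d:ℝ)) (by positivity : (0:ℝ) ≤ (d:ℝ)))]
        have hma0 : (0:ℝ) ≤ (ma:ℝ) := by positivity
        have hexp : (d:ℝ) * (2*c/(16*(d:ℝ)*(d:ℝ)+1) * ((d:ℝ)*NN) + 1)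
            = (d:ℝ) * (2*c/(16*(d:ℝ)*(d:ℝ)+1) * ((d:ℝ)*NN)) + d := by ring
        have hcNg : c * (Ng:ℝ) = c * (NN:ℝ) + c * (ma:ℝ) := by rw [← hNg']; ring
        have hcma : 0 ≤ c * (ma:ℝ) := mul_nonneg hc.le hma0
        linarith [hGoodcard, hcard2, hsum, hdd, hKcNN]
      obtain ⟨n, hnG, hnB⟩ := hex
      refine ⟨F^[n] z, ⟨n, rfl⟩, ?_⟩
      rw [dist_pi_lt_iff hε]
      intro i
      simp only [hGoodFdef, Finset.mem_filter] at hnG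
      have hk : (i:ℕ)+1 ∈ Finset.Icc 1 d := Finset.mem_Icc.mpr ⟨by omega, by
        have := i.isLt
        omega⟩
      have hgood1 := hnG.2 ((i:ℕ)+1) hk
      have hnR : n ∈ Finset.range NN := hnG.1
      have hbad1 : dist (T^[((i:ℕ)+1)*n] (z i)) (T^[((i:ℕ)+1)*n] (T^[((i:ℕ)+1)*ma] x)) ≤ ε/4 := by
        by_contra hcon2
        apply hnB i
        simp only [hBadFdef, Finset.mem_filter]
        exact ⟨hnR, lt_of_not_ge hcon2⟩
      have hcomb : T^[((i:ℕ)+1)*n] (T^[((i:ℕ)+1)*ma] x) = T^[((i:ℕ)+1)*(n+ma)] x := by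
        rw [← Function.iterate_add_apply]
        have heq3 : ((i:ℕ)+1)*n + ((i:ℕ)+1)*ma = ((i:ℕ)+1)*(n+ma) := by ring
        rw [heq3]
      rw [hcomb] at hbad1
      have hFz : F^[n] z i = T^[((i:ℕ)+1)*n] (z i) := hFiter n z i
      rw [hFz]
      calc dist ((fun _ : Fin d => x) i) (T^[((i:ℕ)+1)*n] (z i))
          ≤ dist x (T^[((i:ℕ)+1)*(n+ma)] x)
            + dist (T^[((i:ℕ)+1)*(n+ma)] x) (T^[((i:ℕ)+1)*n] (z i)) := dist_triangle _ _ _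
        _ ≤ ε/4 + ε/4 := by
            refine add_le_add ?_ ?_
            · rw [dist_comm]
              exact le_trans hgood1 hε'le
            · rw [dist_comm]
              exact hbad1
        _ < ε := by linarith

    exact Set.Subset.antisymm (hsubset _ _ hz) (hsubset _ _ hkey)
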